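/- arXiv:0804.0144 — 5 statements merged into one kernel-verified Lean document; each statement's English description precedes it below -/
import Mathlib

section
/- Let m ≥ 5 be an integer with gcd(m,3) = 1. Then for every integer x ≥ 1, |S_m(x)| ≤ μ_m · x^{λ_m}. -/
/-!
With `ζ = e^{2πi/m}` and `P_N(z) = ∑_{n<N} (-1)^{s(n)} z^n`, orthogonality of the characters
`a ↦ ζ^{an}` gives `m S_m(x) = ∑_{a<m} P_x(ζ^a)`. Since `s(2n) = s(n)` and `s(2n+1) = s(n)+1`,
`P_{2N}(z) = (1 - z) P_N(z²)`, so `|P_x(e^{2πiα})| ≤ 2|sin πα| |P_{⌊x/2⌋}(e^{4πiα})| + 1`.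
On the grid `α = a/m` with `3 ∤ m` one has `|sin πα| min(|sin πα|, |sin 2πα|) ≤ b_m²`: either
`|sin πα| ≤ b_m`, or two consecutive factors multiply to at most `b_m²`. Induction on `x` then
gives `|P_x(ζ^a)| ≤ μ_m x^{λ_m} - ν_m` with `2^{λ_m} = 2 b_m`.
-/

open Finset Filter Topology

noncomputable section

/-- `s n` is the number of 1's in the binary expansion of `n`. -/
def s (n : ℕ) : ℕ := (Nat.digits 2 n).count 1

/-- `S m x = ∑_{0 ≤ n < x, m ∣ n} (-1)^(s n)`. -/
def S (m x : ℕ) : ℝ := ∑ n ∈ Finset.range x, if m ∣ n then (-1 : ℝ) ^ (s n) else 0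

/-- `F α N = ∑_{n=0}^{N-1} e^{2πi(αn + s(n)/2)}`. -/
def F (α : ℝ) (N : ℕ) : ℂ :=
  ∑ n ∈ Finset.range N, Complex.exp (2 * Real.pi * Complex.I * ((α : ℂ) * n + (s n : ℂ) / 2))

/-- `bsq m = b_m ^ 2`, defined by cases on `m mod 3`. -/
def bsq (m : ℕ) : ℝ :=
  if m % 3 = 0 then
    Real.sin (Real.pi / 3 * (1 + 3 / m)) * (Real.sqrt 3 - Real.sin (Real.pi / 3 * (1 + 3 / m)))
  else if m % 3 = 1 then
    Real.sin (Real.pi / 3 * (1 - 1 / m)) * (Real.sqrt 3 - Real.sin (Real.pi / 3 * (1 - 1 / m)))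
  else
    Real.sin (Real.pi / 3 * (1 + 1 / m)) * (Real.sqrt 3 - Real.sin (Real.pi / 3 * (1 + 1 / m)))

/-- `b m` is the positive real number with `(b m)^2 = bsq m`. -/
def b (m : ℕ) : ℝ := Real.sqrt (bsq m)

/-- `lam m = λ_m = 1 + log₂ b_m`. -/
def lam (m : ℕ) : ℝ := 1 + Real.logb 2 (b m)

/-- `mu m = μ_m = (2 b_m + 1)/(2 b_m - 1)`. -/
def mu (m : ℕ) : ℝ := (2 * b m + 1) / (2 * b m - 1)

/-- `U m x`: positive integers `≤ x` divisible by `m` and not by 3. -/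
def U (m x : ℕ) : Finset ℕ := (Finset.Icc 1 x).filter (fun n => m ∣ n ∧ ¬ (3 ∣ n))

/-- `V p n`: positive integers `≤ n` whose least prime divisor is `p`. -/
def V (p n : ℕ) : Finset ℕ := (Finset.Icc 1 n).filter (fun j => Nat.minFac j = p)


open Real

lemma s_two_mul (n : ℕ) : s (2 * n) = s n := by
  rcases Nat.eq_zero_or_pos n with rfl | hn
  · rfl
  rw [s, Nat.digits_def' (by norm_num) (by positivity)]
  simp [s]

lemma s_two_mul_add_one (n : ℕ) : s (2 * n + 1) = s n + 1 := by
  rw [s, Nat.digits_def' (by norm_num) (by positivity), Nat.mul_add_mod,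
    show (2 * n + 1) / 2 = n by omega]
  simp [s, add_comm]

section ThueMorse

variable {R : Type*}

def thueMorseSum [CommRing R] (N : ℕ) (z : R) : R := ∑ n ∈ range N, (-1) ^ s n * z ^ n

lemma thueMorseSum_two_mul [CommRing R] (N : ℕ) (z : R) :
    thueMorseSum (2 * N) z = (1 - z) * thueMorseSum N (z ^ 2) := by
  induction N with
  | zero => simp [thueMorseSum]
  | succ N ih =>
    rw [Nat.mul_succ, thueMorseSum, sum_range_succ, sum_range_succ, ← thueMorseSum, ih,
      thueMorseSum, thueMorseSum, sum_range_succ, s_two_mul, s_two_mul_add_one]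
    ring

lemma IsPrimitiveRoot.sum_range_pow_pow [CommRing R] [IsDomain R] {ζ : R} {k : ℕ}
    (hζ : IsPrimitiveRoot ζ k) (n : ℕ) :
    ∑ a ∈ range k, (ζ ^ a) ^ n = if k ∣ n then (k : R) else 0 := by
  simp_rw [← pow_mul, mul_comm _ n, pow_mul]
  split_ifs with h
  · simp [(hζ.pow_eq_one_iff_dvd n).2 h]
  · have hne : ζ ^ n - 1 ≠ 0 := sub_ne_zero.2 (mt (hζ.pow_eq_one_iff_dvd n).1 h)
    apply eq_zero_of_ne_zero_of_mul_right_eq_zero hne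
    rw [geom_sum_mul, ← pow_mul, mul_comm, pow_mul, hζ.pow_eq_one, one_pow, sub_self]

lemma IsPrimitiveRoot.sum_thueMorseSum_pow [CommRing R] [IsDomain R] {ζ : R} {m : ℕ}
    (hζ : IsPrimitiveRoot ζ m) (x : ℕ) :
    ∑ a ∈ range m, thueMorseSum x (ζ ^ a) =
      m * ∑ n ∈ range x, if m ∣ n then (-1) ^ s n else 0 := by
  simp_rw [thueMorseSum]
  rw [sum_comm, mul_sum]
  refine sum_congr rfl fun n _ => ?_
  rw [← mul_sum, hζ.sum_range_pow_pow]
  split_ifs <;> ring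

variable [NormedField R] {z : R}

lemma norm_neg_one_pow_mul_pow_le (hz : ‖z‖ ≤ 1) (k n : ℕ) : ‖(-1) ^ k * z ^ n‖ ≤ 1 := by
  simpa using pow_le_one₀ (norm_nonneg z) hz

lemma norm_thueMorseSum_le (hz : ‖z‖ ≤ 1) (N : ℕ) : ‖thueMorseSum N z‖ ≤ N :=
  (norm_sum_le _ _).trans <| by
    simpa using sum_le_sum fun n (_ : n ∈ range N) => norm_neg_one_pow_mul_pow_le hz (s n) n

lemma norm_thueMorseSum_le_norm_one_sub_mul (hz : ‖z‖ ≤ 1) (N : ℕ) :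
    ‖thueMorseSum N z‖ ≤ ‖1 - z‖ * ‖thueMorseSum (N / 2) (z ^ 2)‖ + 1 := by
  have heven : ‖thueMorseSum (2 * (N / 2)) z‖ = ‖1 - z‖ * ‖thueMorseSum (N / 2) (z ^ 2)‖ := by
    rw [thueMorseSum_two_mul, norm_mul]
  rcases Nat.even_or_odd' N with ⟨k, rfl | rfl⟩
  · rw [← heven]
    simp
  · rw [show (2 * k + 1) / 2 = k by omega] at heven ⊢
    rw [← heven, thueMorseSum, sum_range_succ, ← thueMorseSum]
    exact (norm_add_le _ _).trans (add_le_add_right (norm_neg_one_pow_mul_pow_le hz _ _) _)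

end ThueMorse

section RecBound

variable {β x : ℝ}

/-- `μ x ^ λ - ν` with `μ = (2β+1)/(2β-1)` and `λ = 1 + log₂ β`; `ν = 3/(4β²-1)` is the constant
for which `recBound β (4 * x) = 4 * β ^ 2 * recBound β x + 3` holds exactly. -/
def recBound (β x : ℝ) : ℝ :=
  (2 * β + 1) / (2 * β - 1) * x ^ (1 + logb 2 β) - 3 / (4 * β ^ 2 - 1)

lemma two_rpow_one_add_logb (hβ : 0 < β) : (2 : ℝ) ^ (1 + logb 2 β) = 2 * β := by
  rw [rpow_add zero_lt_two, rpow_one, rpow_logb zero_lt_two (by norm_num) hβ]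

lemma two_mul_rpow_one_add_logb (hβ : 0 < β) (hx : 0 ≤ x) :
    (2 * x) ^ (1 + logb 2 β) = 2 * β * x ^ (1 + logb 2 β) := by
  rw [mul_rpow zero_le_two hx, two_rpow_one_add_logb hβ]

lemma one_add_logb_nonneg (hβ : 1 / 2 ≤ β) : 0 ≤ 1 + logb 2 β := by
  have : logb 2 (1 / 2) ≤ logb 2 β := logb_le_logb_of_le (by norm_num) (by norm_num) hβ
  rw [one_div, logb_inv, logb_self_eq_one one_lt_two] at this
  linarith

lemma recBound_mono (hβ : 1 / 2 < β) {y : ℝ} (hx : 0 ≤ x) (hxy : x ≤ y) :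
    recBound β x ≤ recBound β y := by
  have hμ : 0 ≤ (2 * β + 1) / (2 * β - 1) := div_nonneg (by linarith) (by linarith)
  unfold recBound
  gcongr
  exact one_add_logb_nonneg hβ.le

lemma recBound_le_mul_rpow (hβ : 1 / 2 < β) :
    recBound β x ≤ (2 * β + 1) / (2 * β - 1) * x ^ (1 + logb 2 β) := by
  have : 0 < 3 / (4 * β ^ 2 - 1) := div_pos three_pos (by nlinarith)
  unfold recBound
  linarith

lemma two_mul_recBound_add_one_le (hβ : 1 / 2 < β) (hβ1 : β ≤ 1) (hx : 0 ≤ x) :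
    2 * β * recBound β x + 1 ≤ recBound β (2 * x) := by
  have hν : 1 ≤ 3 / (4 * β ^ 2 - 1) * (2 * β - 1) := by
    rw [div_mul_eq_mul_div, le_div_iff₀ (by nlinarith)]
    nlinarith
  unfold recBound
  rw [two_mul_rpow_one_add_logb (by linarith) hx]
  linarith

lemma four_mul_recBound_add_three (hβ : 1 / 2 < β) (hx : 0 ≤ x) :
    4 * β ^ 2 * recBound β x + 3 = recBound β (4 * x) := by
  have hβ0 : 0 < β := by linarith
  have hden : 4 * β ^ 2 - 1 ≠ 0 := by nlinarith
  unfold recBound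
  rw [show 4 * x = 2 * (2 * x) by ring, two_mul_rpow_one_add_logb hβ0 (by linarith),
    two_mul_rpow_one_add_logb hβ0 hx]
  field_simp
  ring

lemma one_le_recBound_one (hβ : 1 / 2 < β) : 1 ≤ recBound β 1 := by
  have hden : 0 < 4 * β ^ 2 - 1 := by nlinarith
  have h : (2 * β + 1) / (2 * β - 1) - 3 / (4 * β ^ 2 - 1) =
      1 + (4 * β - 1) / (4 * β ^ 2 - 1) := by
    rw [show 4 * β ^ 2 - 1 = (2 * β - 1) * (2 * β + 1) by ring]
    field_simp [(by linarith : 2 * β - 1 ≠ 0), (by linarith : 2 * β + 1 ≠ 0)]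
    ring
  rw [recBound, one_rpow, mul_one, h]
  linarith [div_pos (by linarith : 0 < 4 * β - 1) hden]

lemma three_le_recBound_two (hβ : 1 / 2 < β) : 3 ≤ recBound β 2 := by
  have hden : 0 < 4 * β ^ 2 - 1 := by nlinarith
  have h : (2 * β + 1) / (2 * β - 1) * (2 * β) - 3 / (4 * β ^ 2 - 1) =
      3 + 2 * β * (4 * β ^ 2 - 2 * β + 1) / (4 * β ^ 2 - 1) := by
    rw [show 4 * β ^ 2 - 1 = (2 * β - 1) * (2 * β + 1) by ring]
    field_simp [(by linarith : 2 * β - 1 ≠ 0), (by linarith : 2 * β + 1 ≠ 0)]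
    ring
  rw [recBound, two_rpow_one_add_logb (by linarith), h]
  have : 0 < 2 * β * (4 * β ^ 2 - 2 * β + 1) := by nlinarith [sq_nonneg (2 * β - 1)]
  linarith [div_pos this hden]

/-- If `c i ≤ c (T i)` then `c i ≤ β` and one halving step gains the factor `2β`; otherwise
`c i c (T i) ≤ β²` and two halving steps together gain `4β²`. -/
theorem le_recBound_of_le_two_mul_add_one {ι : Type*} (hβ : 1 / 2 < β) (hβ1 : β ≤ 1)
    (T : ι → ι) (c : ι → ℝ) (f : ι → ℕ → ℝ) (hc0 : ∀ i, 0 ≤ c i) (hc1 : ∀ i, c i ≤ 1)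
    (hc : ∀ i, c i * min (c i) (c (T i)) ≤ β ^ 2) (hf : ∀ i x, f i x ≤ x)
    (hrec : ∀ i x, f i x ≤ 2 * c i * f (T i) (x / 2) + 1) :
    ∀ x : ℕ, 1 ≤ x → ∀ i, f i x ≤ recBound β x := by
  intro x
  induction x using Nat.strong_induction_on with
  | _ x ih =>
  intro hx i
  have hpos : ∀ y : ℕ, 1 ≤ y → 0 ≤ recBound β y := fun y hy =>
    zero_le_one.trans <| (one_le_recBound_one hβ).trans <|
      recBound_mono hβ zero_le_one (by exact_mod_cast hy)
  by_cases hx4 : x < 4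
  · refine (hf i x).trans ?_
    rcases (by omega : x = 1 ∨ 2 ≤ x) with rfl | hx2
    · simpa using one_le_recBound_one hβ
    · calc (x : ℝ) ≤ 3 := by exact_mod_cast (by omega : x ≤ 3)
        _ ≤ recBound β 2 := three_le_recBound_two hβ
        _ ≤ recBound β x := recBound_mono hβ zero_le_two (by exact_mod_cast hx2)
  have hc0i := hc0 i
  rcases le_total (c i) (c (T i)) with hle | hle
  · have hcβ : c i ≤ β := by
      have := hc i
      rw [min_eq_left hle] at this
      nlinarith
    have hx2 : ((x / 2 : ℕ) : ℝ) ≤ x / 2 := Nat.cast_div_le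
    have hf1 := ih (x / 2) (by omega) (by omega) (T i)
    have := hpos (x / 2) (by omega)
    calc f i x ≤ 2 * c i * f (T i) (x / 2) + 1 := hrec i x
      _ ≤ 2 * β * recBound β (x / 2 : ℕ) + 1 := by nlinarith
      _ ≤ 2 * β * recBound β ((x : ℝ) / 2) + 1 :=
        add_le_add_left (mul_le_mul_of_nonneg_left
          (recBound_mono hβ (Nat.cast_nonneg _) hx2) (by linarith)) 1
      _ ≤ recBound β (2 * ((x : ℝ) / 2)) := two_mul_recBound_add_one_le hβ hβ1 (by positivity)
      _ = recBound β x := by ring_nf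
  · have hcc : c i * c (T i) ≤ β ^ 2 := by simpa [min_eq_right hle] using hc i
    have hx4' : ((x / 2 / 2 : ℕ) : ℝ) ≤ x / 4 := by
      rw [Nat.div_div_eq_div_mul]
      exact_mod_cast Nat.cast_div_le
    have hf2 := ih (x / 2 / 2) (by omega) (by omega) (T (T i))
    have := hpos (x / 2 / 2) (by omega)
    calc f i x ≤ 2 * c i * (2 * c (T i) * f (T (T i)) (x / 2 / 2) + 1) + 1 :=
          (hrec i x).trans <| add_le_add_left
            (mul_le_mul_of_nonneg_left (hrec (T i) (x / 2)) (by linarith)) 1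
      _ = 4 * (c i * c (T i)) * f (T (T i)) (x / 2 / 2) + 2 * c i + 1 := by ring
      _ ≤ 4 * β ^ 2 * recBound β (x / 2 / 2 : ℕ) + 3 := by
        nlinarith [hc1 i, mul_le_mul_of_nonneg_left hf2 (mul_nonneg hc0i (hc0 (T i))),
          mul_le_mul_of_nonneg_right hcc ‹_›]
      _ ≤ 4 * β ^ 2 * recBound β ((x : ℝ) / 4) + 3 :=
        add_le_add_left (mul_le_mul_of_nonneg_left
          (recBound_mono hβ (Nat.cast_nonneg _) hx4') (by positivity)) 3
      _ = recBound β (4 * ((x : ℝ) / 4)) := four_mul_recBound_add_three hβ (by positivity)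
      _ = recBound β x := by ring_nf

end RecBound

lemma abs_sin_mul_min_abs_sin_two_mul_le (θ : ℝ) :
    |sin θ| * min |sin θ| |sin (2 * θ)| ≤ |sin θ| * (√3 - |sin θ|) := by
  set t := |sin θ|
  set c := |cos θ|
  have htc : t ^ 2 + c ^ 2 = 1 := by simp only [t, c, sq_abs, sin_sq_add_cos_sq]
  have h2 : |sin (2 * θ)| = 2 * t * c := by simp only [sin_two_mul, abs_mul, abs_two, t, c]
  have h3 : √3 ^ 2 = 3 := sq_sqrt (by norm_num)
  have ht : 0 ≤ t := abs_nonneg _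
  have hc : 0 ≤ c := abs_nonneg _
  refine mul_le_mul_of_nonneg_left ?_ ht
  rcases le_or_gt t (√3 / 2) with hle | hlt
  · exact (min_le_left _ _).trans (by linarith)
  · refine (min_le_right _ _).trans ?_
    rw [h2]
    have hc2 : 2 * c < 1 := by nlinarith [sqrt_nonneg 3]
    have hsq : (t * (2 * c + 1)) ^ 2 ≤ √3 ^ 2 := by
      have hfac : √3 ^ 2 - (t * (2 * c + 1)) ^ 2 =
          (1 - 2 * c) * (2 - 3 * c ^ 2 - 2 * c ^ 3) := by
        rw [h3, mul_pow, (by linarith : t ^ 2 = 1 - c ^ 2)]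
        ring
      nlinarith [mul_nonneg (by linarith : 0 ≤ 1 - 2 * c)
        (by nlinarith : 0 ≤ 2 - 3 * c ^ 2 - 2 * c ^ 3)]
    nlinarith [(abs_le_of_sq_le_sq' hsq (sqrt_nonneg 3)).2]

lemma sqrt_three_le_two_mul_sin_mul_cos {u : ℝ} (hu0 : 0 < u) (hu : u ≤ 1 / 10) :
    √3 ≤ 2 * sin (π / 3 + u) * cos (3 * u) := by
  have h3 : √3 ^ 2 = 3 := sq_sqrt (by norm_num)
  have hr : √3 ≤ 1.7321 := by nlinarith [sqrt_nonneg 3]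
  have hcos : 1 - u ^ 2 / 2 ≤ cos u := one_sub_sq_div_two_le_cos
  have hsin : u - u ^ 3 / 6 < sin u := sin_gt_sub_cube hu0
  have hcos3 : 1 - (3 * u) ^ 2 / 2 ≤ cos (3 * u) := one_sub_sq_div_two_le_cos
  rw [sin_add, sin_pi_div_three, cos_pi_div_three]
  have hA : √3 * (1 - u ^ 2 / 2) + (u - u ^ 3 / 6) ≤ √3 * cos u + sin u := by
    nlinarith [sqrt_nonneg 3]
  have hD : 0 ≤ 1 - (3 * u) ^ 2 / 2 := by nlinarith
  have hlow : √3 ≤ (√3 * (1 - u ^ 2 / 2) + (u - u ^ 3 / 6)) * (1 - (3 * u) ^ 2 / 2) := by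
    have hru : √3 * u ≤ 1.7321 * (1 / 10) := mul_le_mul hr hu hu0.le (by norm_num)
    have hfac : 0 ≤ 1 - 5 * √3 * u - 14 / 3 * u ^ 2 + 9 / 4 * √3 * u ^ 3 + 3 / 4 * u ^ 4 := by
      nlinarith [mul_nonneg (sqrt_nonneg 3) (pow_nonneg hu0.le 3), pow_nonneg hu0.le 4]
    nlinarith [mul_nonneg hu0.le hfac]
  nlinarith [mul_le_mul hA hcos3 hD (by nlinarith [sqrt_nonneg 3])]

lemma sin_pi_mul_div_le_sin {m i j : ℕ} (hij : i ≤ j) (hj : 2 * j ≤ m) :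
    sin (π * (i / m)) ≤ sin (π * (j / m)) := by
  rcases Nat.eq_zero_or_pos m with rfl | hm
  · simp
  have hm' : (0 : ℝ) < m := by exact_mod_cast hm
  apply sin_le_sin_of_le_of_le_pi_div_two
  · linarith [pi_pos, mul_nonneg pi_pos.le (by positivity : (0 : ℝ) ≤ i / m)]
  · rw [← mul_div_assoc, div_le_div_iff₀ hm' two_pos]
    nlinarith [mul_le_mul_of_nonneg_left (by exact_mod_cast hj : 2 * (j : ℝ) ≤ m) pi_pos.le]
  · gcongr

lemma sin_pi_mul_div_nonneg {m r : ℕ} (hr : r ≤ m) : 0 ≤ sin (π * (r / m)) := by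
  apply sin_nonneg_of_nonneg_of_le_pi (by positivity)
  rcases Nat.eq_zero_or_pos m with rfl | hm
  · simp [pi_pos.le]
  · exact mul_le_of_le_one_right pi_pos.le
      ((div_le_one (by exact_mod_cast hm)).2 (by exact_mod_cast hr))

lemma sin_pi_mul_div_add_sin_succ (m k : ℕ) :
    sin (π * (k / m)) + sin (π * ((k + 1 : ℕ) / m)) =
      2 * sin (π * ((2 * k + 1) / (2 * m))) * cos (π / (2 * m)) := by
  rw [sin_add_sin, ← cos_neg]
  congr 3 <;> push_cast <;> ring

section Grid

variable {m : ℕ}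

lemma bsq_eq_of_eq_three_mul_add_one {k : ℕ} (hk : m = 3 * k + 1) :
    bsq m = sin (π * (k / m)) * (√3 - sin (π * (k / m))) := by
  have hm : (m : ℝ) = 3 * k + 1 := by exact_mod_cast hk
  have harg : π / 3 * (1 - 1 / m) = π * (k / m) := by
    rw [hm]
    field_simp
    ring
  rw [bsq, if_neg (by omega), if_pos (by omega), harg]

lemma bsq_eq_of_eq_three_mul_add_two {k : ℕ} (hk : m = 3 * k + 2) :
    bsq m = sin (π * ((k + 1 : ℕ) / m)) * (√3 - sin (π * ((k + 1 : ℕ) / m))) := by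
  have hm : (m : ℝ) = 3 * k + 2 := by exact_mod_cast hk
  have harg : π / 3 * (1 + 1 / m) = π * ((k + 1 : ℕ) / m) := by
    rw [hm]
    push_cast
    field_simp
    ring
  rw [bsq, if_neg (by omega), if_neg (by omega), harg]

lemma sqrt_three_le_sin_add_sin_of_eq_three_mul_add_one {k : ℕ} (hk : m = 3 * k + 1)
    (hm : 7 ≤ m) : √3 ≤ sin (π * (k / m)) + sin (π * ((k + 1 : ℕ) / m)) := by
  have hm' : (7 : ℝ) ≤ m := by exact_mod_cast hm
  have hkm : (k : ℝ) = (m - 1) / 3 := by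
    rw [(by exact_mod_cast hk : (m : ℝ) = 3 * k + 1)]
    ring
  have hu : π / (6 * m) ≤ 1 / 10 := by
    rw [div_le_div_iff₀ (by positivity) (by norm_num)]
    nlinarith [pi_lt_four]
  have harg : π * ((2 * k + 1) / (2 * m)) = π / 3 + π / (6 * m) := by
    rw [hkm]
    field_simp
    ring
  have hcos : π / (2 * m) = 3 * (π / (6 * m)) := by
    field_simp
    ring
  rw [sin_pi_mul_div_add_sin_succ, harg, hcos]
  exact sqrt_three_le_two_mul_sin_mul_cos (by positivity) hu

lemma sin_add_sin_le_sqrt_three_of_eq_three_mul_add_two {k : ℕ} (hk : m = 3 * k + 2) :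
    sin (π * (k / m)) + sin (π * ((k + 1 : ℕ) / m)) ≤ √3 := by
  have hm : (2 : ℝ) ≤ m := by exact_mod_cast (by omega : 2 ≤ m)
  have hkm : (k : ℝ) = (m - 2) / 3 := by
    rw [(by exact_mod_cast hk : (m : ℝ) = 3 * k + 2)]
    ring
  have harg : π * ((2 * k + 1) / (2 * m)) = π / 3 - π / (6 * m) := by
    rw [hkm]
    field_simp
    ring
  have hu : 0 ≤ π / (6 * m) := by positivity
  have hu' : π / (6 * m) ≤ π / 3 := by
    rw [div_le_div_iff₀ (by positivity) (by norm_num)]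
    nlinarith [pi_pos]
  have hsin : sin (π / 3 - π / (6 * m)) ≤ √3 / 2 := by
    rw [← sin_pi_div_three]
    exact sin_le_sin_of_le_of_le_pi_div_two (by linarith [pi_pos]) (by linarith [pi_pos])
      (by linarith)
  have hsin0 : 0 ≤ sin (π / 3 - π / (6 * m)) :=
    sin_nonneg_of_nonneg_of_le_pi (by linarith) (by linarith [pi_pos])
  rw [sin_pi_mul_div_add_sin_succ, harg]
  nlinarith [cos_le_one (π / (2 * m)), sqrt_nonneg 3]

/-- `t ↦ t (√3 - t)` increases up to `√3 / 2` and decreases after it, so over the values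
`t = sin (π r / m)` it is largest at `r = ⌊m/3⌋` or `r = ⌊m/3⌋ + 1`, and `bsq m` is the larger
of these two values. -/
lemma sin_mul_sqrt_three_sub_sin_le_bsq (hm : 5 ≤ m) (h3 : ¬ 3 ∣ m) {r : ℕ} (hr : 2 * r ≤ m) :
    sin (π * (r / m)) * (√3 - sin (π * (r / m))) ≤ bsq m := by
  set k := m / 3
  have hm' : (0 : ℝ) < m := by exact_mod_cast (by omega : 0 < m)
  set t := sin (π * (r / m))
  set sk := sin (π * (k / m))
  set sk1 := sin (π * ((k + 1 : ℕ) / m))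
  have hsk : sk ≤ √3 / 2 := by
    have : 0 ≤ π * (k / m) := by positivity
    rw [← sin_pi_div_three]
    refine sin_le_sin_of_le_of_le_pi_div_two (by linarith [pi_pos]) (by linarith [pi_pos]) ?_
    rw [← mul_div_assoc, div_le_div_iff₀ hm' three_pos]
    nlinarith [mul_le_mul_of_nonneg_left
      (by exact_mod_cast (by omega : 3 * k ≤ m) : 3 * (k : ℝ) ≤ m) pi_pos.le]
  have hsk1 : √3 / 2 ≤ sk1 := by
    rw [← sin_pi_div_three]
    refine sin_le_sin_of_le_of_le_pi_div_two (by linarith [pi_pos]) ?_ ?_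
    · rw [← mul_div_assoc, div_le_div_iff₀ hm' two_pos]
      nlinarith [mul_le_mul_of_nonneg_left
        (by exact_mod_cast (by omega : 2 * (k + 1) ≤ m) : 2 * ((k + 1 : ℕ) : ℝ) ≤ m) pi_pos.le]
    · rw [← mul_div_assoc, le_div_iff₀ hm']
      nlinarith [mul_le_mul_of_nonneg_left
        (by exact_mod_cast (by omega : m ≤ 3 * (k + 1)) : (m : ℝ) ≤ 3 * ((k + 1 : ℕ) : ℝ))
        pi_pos.le]
  have hadj : sk * (√3 - sk) ≤ bsq m ∧ sk1 * (√3 - sk1) ≤ bsq m := by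
    rcases (by omega : m = 3 * k + 1 ∨ m = 3 * k + 2) with hk | hk
    · have := sqrt_three_le_sin_add_sin_of_eq_three_mul_add_one hk (by omega)
      rw [bsq_eq_of_eq_three_mul_add_one hk]
      exact ⟨le_rfl, by nlinarith⟩
    · have := sin_add_sin_le_sqrt_three_of_eq_three_mul_add_two hk
      rw [bsq_eq_of_eq_three_mul_add_two hk]
      exact ⟨by nlinarith, le_rfl⟩
  rcases le_or_gt r k with hrk | hrk
  · have : t ≤ sk := sin_pi_mul_div_le_sin hrk (by omega)
    nlinarith [hadj.1]
  · have : sk1 ≤ t := sin_pi_mul_div_le_sin hrk hr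
    nlinarith [hadj.2]

lemma quarter_lt_bsq (hm : 5 ≤ m) (h3 : ¬ 3 ∣ m) : 1 / 4 < bsq m := by
  have hm' : (0 : ℝ) < m := by exact_mod_cast (by omega : 0 < m)
  have hk := sin_mul_sqrt_three_sub_sin_le_bsq hm h3 (r := m / 3) (by omega)
  set t := sin (π * ((m / 3 : ℕ) / m))
  have ht : 1 / 2 ≤ t := by
    rw [← sin_pi_div_six]
    refine sin_le_sin_of_le_of_le_pi_div_two (by linarith [pi_pos]) ?_ ?_
    · rw [← mul_div_assoc, div_le_div_iff₀ hm' two_pos]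
      nlinarith [mul_le_mul_of_nonneg_left
        (by exact_mod_cast (by omega : 2 * (m / 3) ≤ m) : 2 * ((m / 3 : ℕ) : ℝ) ≤ m) pi_pos.le]
    · rw [← mul_div_assoc, le_div_iff₀ hm']
      nlinarith [mul_le_mul_of_nonneg_left
        (by exact_mod_cast (by omega : m ≤ 6 * (m / 3)) : (m : ℝ) ≤ 6 * ((m / 3 : ℕ) : ℝ))
        pi_pos.le]
  have h3 : (3 / 2 : ℝ) < √3 := by
    rw [lt_sqrt (by norm_num)]
    norm_num
  nlinarith [sin_le_one (π * ((m / 3 : ℕ) / m))]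

lemma bsq_le_three_quarters (m : ℕ) : bsq m ≤ 3 / 4 := by
  have h3 : √3 ^ 2 = 3 := sq_sqrt (by norm_num)
  unfold bsq
  split_ifs <;> nlinarith [sq_nonneg (sin (π / 3 * (1 + 3 / m)) - √3 / 2),
    sq_nonneg (sin (π / 3 * (1 - 1 / m)) - √3 / 2), sq_nonneg (sin (π / 3 * (1 + 1 / m)) - √3 / 2)]

lemma exists_abs_sin_eq_sin (hm : 0 < m) (a : ℕ) :
    ∃ r : ℕ, 2 * r ≤ m ∧ |sin (π * (a / m))| = sin (π * (r / m)) := by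
  have hm' : (m : ℝ) ≠ 0 := by exact_mod_cast hm.ne'
  have hmod : |sin (π * (a / m))| = sin (π * ((a % m : ℕ) / m)) := by
    have ha : π * (a / m) = π * ((a % m : ℕ) / m) + (a / m : ℕ) * π := by
      conv_lhs => rw [← Nat.mod_add_div a m]
      push_cast
      field_simp
    rw [ha, sin_add_nat_mul_pi, abs_mul, abs_pow, abs_neg, abs_one, one_pow, one_mul,
      abs_of_nonneg (sin_pi_mul_div_nonneg (Nat.mod_lt a hm).le)]
  rcases le_or_gt (2 * (a % m)) m with h | h
  · exact ⟨a % m, h, hmod⟩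
  · refine ⟨m - a % m, by omega, ?_⟩
    rw [hmod, ← sin_pi_sub, Nat.cast_sub (Nat.mod_lt a hm).le]
    congr 1
    field_simp

lemma abs_sin_mul_min_abs_sin_two_mul_le_bsq (hm : 5 ≤ m) (h3 : ¬ 3 ∣ m) (a : ℕ) :
    |sin (π * (a / m))| * min |sin (π * (a / m))| |sin (π * ((2 * a : ℕ) / m))| ≤ bsq m := by
  obtain ⟨r, hr, hra⟩ := exists_abs_sin_eq_sin (m := m) (by omega) a
  rw [show π * ((2 * a : ℕ) / m) = 2 * (π * (a / m)) by push_cast; ring]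
  refine (abs_sin_mul_min_abs_sin_two_mul_le _).trans ?_
  rw [hra]
  exact sin_mul_sqrt_three_sub_sin_le_bsq hm h3 hr

lemma b_sq (hm : 5 ≤ m) (h3 : ¬ 3 ∣ m) : b m ^ 2 = bsq m :=
  sq_sqrt (by linarith [quarter_lt_bsq hm h3])

lemma half_lt_b (hm : 5 ≤ m) (h3 : ¬ 3 ∣ m) : 1 / 2 < b m := by
  rw [b, lt_sqrt (by norm_num)]
  linarith [quarter_lt_bsq hm h3]

lemma b_le_one (m : ℕ) : b m ≤ 1 := by
  rw [b, sqrt_le_one]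
  linarith [bsq_le_three_quarters m]

end Grid

lemma norm_one_sub_exp_two_pi_I_mul (t : ℝ) :
    ‖1 - Complex.exp (2 * π * Complex.I * t)‖ = 2 * |sin (π * t)| := by
  rw [norm_sub_rev, show 2 * π * Complex.I * t = Complex.I * ((2 * π * t : ℝ) : ℂ) by
    push_cast; ring, Complex.norm_exp_I_mul_ofReal_sub_one, norm_mul, norm_two, norm_eq_abs]
  ring_nf

lemma exp_two_pi_I_div_pow (m a : ℕ) :
    Complex.exp (2 * π * Complex.I / m) ^ a =
      Complex.exp (2 * π * Complex.I * ((a / m : ℝ) : ℂ)) := by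
  rw [← Complex.exp_nat_mul]
  push_cast
  ring_nf

lemma norm_exp_two_pi_I_div_pow (m a : ℕ) : ‖Complex.exp (2 * π * Complex.I / m) ^ a‖ = 1 := by
  rw [exp_two_pi_I_div_pow, show 2 * π * Complex.I * ((a / m : ℝ) : ℂ) =
    ((2 * π * (a / m) : ℝ) : ℂ) * Complex.I by push_cast; ring, Complex.norm_exp_ofReal_mul_I]

lemma norm_thueMorseSum_exp_pow_le {m x : ℕ} (hm : 5 ≤ m) (h3 : ¬ 3 ∣ m) (hx : 1 ≤ x) (a : ℕ) :
    ‖thueMorseSum x (Complex.exp (2 * π * Complex.I / m) ^ a)‖ ≤ recBound (b m) x := by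
  have hz : ∀ a : ℕ, ‖Complex.exp (2 * π * Complex.I / m) ^ a‖ ≤ 1 :=
    fun a => (norm_exp_two_pi_I_div_pow m a).le
  refine le_recBound_of_le_two_mul_add_one (half_lt_b hm h3) (b_le_one m) (fun a : ℕ => 2 * a)
    (fun a : ℕ => |sin (π * (a / m))|)
    (fun (a x : ℕ) => ‖thueMorseSum x (Complex.exp (2 * π * Complex.I / m) ^ a)‖)
    (fun _ => abs_nonneg _) (fun _ => abs_sin_le_one _) (fun a => ?_)
    (fun a x => norm_thueMorseSum_le (hz a) x) (fun a x => ?_) x hx a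
  · rw [b_sq hm h3]
    exact abs_sin_mul_min_abs_sin_two_mul_le_bsq hm h3 a
  · have := norm_thueMorseSum_le_norm_one_sub_mul (hz a) x
    rwa [← pow_mul, mul_comm a 2, exp_two_pi_I_div_pow m a, norm_one_sub_exp_two_pi_I_mul,
      ← exp_two_pi_I_div_pow] at this

theorem stmt_0 (m : ℕ) (hm : 5 ≤ m) (hgcd : Nat.gcd m 3 = 1) (x : ℕ) (hx : 1 ≤ x) :
    |S m x| ≤ mu m * (x : ℝ) ^ lam m := by
  have h3 : ¬ 3 ∣ m := fun h => by simp [Nat.gcd_eq_right h] at hgcd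
  have hm' : (0 : ℝ) < m := by exact_mod_cast (by omega : 0 < m)
  set ζ := Complex.exp (2 * π * Complex.I / m)
  have hsum : (m : ℂ) * (S m x : ℂ) = ∑ a ∈ range m, thueMorseSum x (ζ ^ a) := by
    rw [(Complex.isPrimitiveRoot_exp m (by omega)).sum_thueMorseSum_pow, S]
    push_cast [apply_ite]
    rfl
  have hbound : (m : ℝ) * |S m x| ≤ m * recBound (b m) x :=
    calc (m : ℝ) * |S m x| = ‖(m : ℂ) * (S m x : ℂ)‖ := by simp
      _ ≤ ∑ a ∈ range m, ‖thueMorseSum x (ζ ^ a)‖ := hsum ▸ norm_sum_le _ _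
      _ ≤ ∑ _a ∈ range m, recBound (b m) x :=
        sum_le_sum fun a _ => norm_thueMorseSum_exp_pow_le hm h3 hx a
      _ = m * recBound (b m) x := by simp
  exact (le_of_mul_le_mul_left hbound hm').trans (recBound_le_mul_rpow (half_lt_b hm h3))
end
end

section
/- Let α be a real number and let N = 2^{ν_0} + 2^{ν_1} + ⋯ + 2^{ν_r} with ν_0 > ν_1 > ⋯ > ν_r ≥ 0 be the binary expansion of a positive integer N. Then F_α(N) = ∑_{h=0}^{r} e^{2πi(α·∑_{j=0}^{h−1} 2^{ν_j} + h/2)} · ∏_{k=0}^{ν_h − 1} (1 + e^{2πi(α·2^k + 1/2)}), where the empty sum ∑_{j=0}^{−1} is 0 and the empty product ∏_{k=0}^{−1} is 1. -/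
open Finset Filter Topology

noncomputable section

/-!
For `n < 2 ^ t` the top bit adds one to the digit sum, `s (2 ^ t + n) = s n + 1`, so with
`e(x) = exp(2πix)` we get `F α (2 ^ t + M) = F α (2 ^ t) + e(α 2 ^ t + 1/2) F α M` whenever
`M ≤ 2 ^ t`.
Taking `M = 2 ^ t` gives the product formula for `F α (2 ^ t)`, and splitting off the leading
power `2 ^ ν₀` of `N` and recursing on the rest gives the sum over the binary digits of `N`.
-/

open Complex

lemma s_add_two_pow_mul {t n : ℕ} (hn : n < 2 ^ t) (m : ℕ) :
    s (n + 2 ^ t * m) = s n + s m := by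
  rcases m.eq_zero_or_pos with rfl | hm
  · simp [s]
  have hlen : (Nat.digits 2 n).length ≤ t := (Nat.digits_length_le_iff one_lt_two n).mpr hn
  rw [s, ← Nat.add_sub_cancel' hlen, ← Nat.digits_append_zeroes_append_digits one_lt_two hm]
  simp [s, List.count_replicate]

lemma s_two_pow_add {t n : ℕ} (hn : n < 2 ^ t) : s (2 ^ t + n) = s n + 1 := by
  simpa [add_comm, s] using s_add_two_pow_mul hn 1

lemma F_two_pow_add (α : ℝ) {t M : ℕ} (hM : M ≤ 2 ^ t) :
    F α (2 ^ t + M) =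
      F α (2 ^ t) + exp (2 * Real.pi * I * ((α : ℂ) * 2 ^ t + 1 / 2)) * F α M := by
  rw [F, sum_range_add, F, F, mul_sum]
  congr 1
  refine sum_congr rfl fun n hn => ?_
  rw [s_two_pow_add ((mem_range.mp hn).trans_le hM), ← exp_add]
  congr 1
  push_cast
  ring

lemma F_two_pow (α : ℝ) (t : ℕ) :
    F α (2 ^ t) = ∏ k ∈ range t, (1 + exp (2 * Real.pi * I * ((α : ℂ) * 2 ^ k + 1 / 2))) := by
  induction t with
  | zero => simp [F, s]
  | succ t ih =>
    rw [pow_succ, mul_two, F_two_pow_add α le_rfl, ih, prod_range_succ]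
    ring

lemma sum_two_pow_lt {r t : ℕ} {ν : ℕ → ℕ} (hν : ∀ i < r, ν (i + 1) < ν i) (ht : ν 0 < t) :
    ∑ j ∈ range (r + 1), 2 ^ ν j < 2 ^ t := by
  induction r generalizing ν t with
  | zero => simpa using Nat.pow_lt_pow_right one_lt_two ht
  | succ r ih =>
    have htail := ih (ν := fun j => ν (j + 1)) (fun i hi => hν (i + 1) (by omega)) (hν 0 (by omega))
    have hdouble : 2 ^ (ν 0 + 1) ≤ 2 ^ t := Nat.pow_le_pow_right two_pos ht
    rw [sum_range_succ']
    omega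

theorem stmt_2 (α : ℝ) (r : ℕ) (ν : ℕ → ℕ) (hν : ∀ i, i < r → ν (i + 1) < ν i)
    (N : ℕ) (hN : N = ∑ j ∈ Finset.range (r + 1), 2 ^ (ν j)) :
    F α N = ∑ h ∈ Finset.range (r + 1),
      Complex.exp (2 * Real.pi * Complex.I *
          ((α : ℂ) * (∑ j ∈ Finset.range h, (2 : ℂ) ^ (ν j)) + (h : ℂ) / 2)) *
        ∏ k ∈ Finset.range (ν h),
          (1 + Complex.exp (2 * Real.pi * Complex.I * ((α : ℂ) * 2 ^ k + 1 / 2))) := by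
  subst hN
  induction r generalizing ν with
  | zero => simp [F_two_pow]
  | succ r ih =>
    have hν' : ∀ i < r, ν (i + 1 + 1) < ν (i + 1) := fun i hi => hν (i + 1) (by omega)
    have htail : ∑ j ∈ range (r + 1), 2 ^ ν (j + 1) ≤ 2 ^ ν 0 :=
      (sum_two_pow_lt hν' (hν 0 (by omega))).le
    rw [sum_range_succ', add_comm, F_two_pow_add α htail, F_two_pow, ih _ hν', mul_sum,
      sum_range_succ' _ (r + 1), add_comm]
    congr 1
    · refine sum_congr rfl fun h _ => ?_
      rw [← mul_assoc, ← exp_add, sum_range_succ']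
      congr 2
      push_cast
      ring
    · simp
end
end

section
/- Let m ≥ 5 be an integer with gcd(m,3) = 1 and let t be any integer. Then for every integer h ≥ 1, ∏_{k=1}^{h} |sin(2^{k−1}·tπ/m)| ≤ b_m^{h−1}. -/
open Finset Filter Topology

noncomputable section

/-!
Put `β = sin (π/3 - π/(3m)) * sin (π/3 + π/(3m)) = 3/4 - sin² (π/(3m))`; comparing
`sin y (√3 - sin y)` with this product shows `β ≤ b_m²`. Reducing `t` modulo `m` and up to sign,
`x = tπ/m` may be taken in `[0, π/2]`, and since `3 ∤ m` it lies at distance at least `π/(3m)`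
from `π/3`. Below `π/3` this gives `sin² x ≤ β`; above `π/3` the function `sin x sin 2x` is
decreasing, which gives `sin x sin 2x ≤ β`. Hence every factor `|sin (2^k tπ/m)|` is at most `b_m`
or forms with the next one a pair of product at most `b_m²`, and grouping the factors greedily
into singletons and pairs bounds the product by `b_m^(h-1)`.
-/

open Real

theorem prod_range_succ_le_pow {f : ℕ → ℝ} {c : ℝ} (hf0 : ∀ k, 0 ≤ f k) (hf1 : ∀ k, f k ≤ 1)
    (hc0 : 0 ≤ c) (hc1 : c ≤ 1) (hstep : ∀ k, f k ≤ c ∨ f k * f (k + 1) ≤ c ^ 2) (n : ℕ) :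
    ∏ k ∈ range (n + 1), f k ≤ c ^ n := by
  induction n using Nat.strong_induction_on generalizing f with
  | _ n ih =>
    rcases n with _ | n
    · simpa using hf1 0
    rcases hstep 0 with h0 | h01
    · rw [prod_range_succ', mul_comm]
      calc f 0 * ∏ k ∈ range (n + 1), f (k + 1) ≤ c * c ^ n :=
            mul_le_mul h0 (ih n n.lt_succ_self (fun _ => hf0 _) (fun _ => hf1 _)
              (fun _ => hstep _)) (prod_nonneg fun _ _ => hf0 _) hc0
        _ = c ^ (n + 1) := (pow_succ' c n).symm
    rcases n with _ | n
    · calc ∏ k ∈ range 2, f k = f 0 * f 1 := by simp [prod_range_succ]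
        _ ≤ c ^ 2 := h01
        _ ≤ c ^ 1 := pow_le_pow_of_le_one hc0 hc1 (by norm_num)
    · rw [prod_range_succ', prod_range_succ', mul_assoc, mul_comm]
      calc f (0 + 1) * f 0 * ∏ k ∈ range (n + 1), f (k + 1 + 1) ≤ c ^ 2 * c ^ n :=
            mul_le_mul (by simpa [mul_comm] using h01)
              (ih n (by omega) (fun _ => hf0 _) (fun _ => hf1 _) (fun _ => hstep _))
              (prod_nonneg fun _ _ => hf0 _) (sq_nonneg c)
        _ = c ^ (n + 1 + 1) := by ring

theorem abs_sin_int_mul_pi_div_eq {m : ℕ} {a b : ℤ} (h : a ≡ b [ZMOD m] ∨ a ≡ -b [ZMOD m]) :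
    |sin (a * π / m)| = |sin (b * π / m)| := by
  rcases eq_or_ne m 0 with rfl | hm
  · simp
  have key : ∀ {a b : ℤ}, a ≡ b [ZMOD m] → |sin (a * π / m)| = |sin (b * π / m)| := by
    intro a b hab
    obtain ⟨k, hk⟩ := hab.dvd
    have : (b : ℝ) * π / m = a * π / m + k * π := by
      rw [show (b : ℝ) = a + m * k by exact_mod_cast (by linarith : b = a + m * k)]
      field_simp
    rw [this, sin_add_int_mul_pi, abs_mul, abs_neg_one_zpow, one_mul]
  rcases h with h | h
  · exact key h
  · rw [key h]; push_cast; rw [neg_mul, neg_div, sin_neg, abs_neg]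

theorem exists_modEq_or_modEq_neg {m : ℕ} (hm : 0 < m) (t : ℤ) :
    ∃ v : ℤ, 0 ≤ v ∧ 2 * v ≤ m ∧ (t ≡ v [ZMOD m] ∨ t ≡ -v [ZMOD m]) := by
  have hr0 : 0 ≤ t % m := Int.emod_nonneg t (by omega)
  have hrm : t % m < m := Int.emod_lt_of_pos t (by omega)
  by_cases hr : 2 * (t % m) ≤ m
  · exact ⟨t % m, hr0, hr, .inl (Int.mod_modEq t m).symm⟩
  · refine ⟨m - t % m, by omega, by omega, .inr ((Int.mod_modEq t m).symm.trans ?_)⟩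
    exact Int.modEq_iff_dvd.2 ⟨-1, by ring⟩

theorem sin_pi_div_three_sub_mul_sin_add_le (e : ℝ) (he : 0 ≤ sin (π / 3 + e)) :
    sin (π / 3 - e) * sin (π / 3 + e) ≤ sin (π / 3 + e) * (√3 - sin (π / 3 + e)) := by
  have key : √3 - sin (π / 3 + e) = sin (π / 3 - e) + √3 * (1 - cos e) := by
    rw [sin_add, sin_sub, sin_pi_div_three, cos_pi_div_three]; ring
  rw [key, mul_add, mul_comm (sin _)]
  exact le_add_of_nonneg_right
    (mul_nonneg he (mul_nonneg (sqrt_nonneg 3) (sub_nonneg.2 (cos_le_one e))))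

theorem sin_mul_sin_two_mul_le_of_le {x y : ℝ} (hy : π / 3 ≤ y) (hyx : y ≤ x) (hx : x ≤ π / 2) :
    sin x * sin (2 * x) ≤ sin y * sin (2 * y) := by
  have hcx : 0 ≤ cos x := cos_nonneg_of_neg_pi_div_two_le_of_le (by linarith [pi_pos]) hx
  have hcxy : cos x ≤ cos y :=
    cos_le_cos_of_nonneg_of_le_pi (by linarith [pi_pos]) (by linarith [pi_pos]) hyx
  have hcy : cos y ≤ 1 / 2 := cos_pi_div_three ▸
    cos_le_cos_of_nonneg_of_le_pi (by linarith [pi_pos]) (by linarith [pi_pos]) hy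
  have hsq : ∀ t, sin t * (2 * sin t * cos t) = 2 * cos t * (1 - cos t ^ 2) := fun t => by
    linear_combination (2 * cos t) * sin_sq_add_cos_sq t
  have hsum : cos y ^ 2 + cos y * cos x + cos x ^ 2 ≤ 1 := by nlinarith
  rw [sin_two_mul, sin_two_mul, hsq, hsq]
  nlinarith [mul_nonneg (sub_nonneg.2 hcxy) (sub_nonneg.2 hsum)]

def sinThirdProd (m : ℕ) : ℝ := sin (π / 3 - π / (3 * m)) * sin (π / 3 + π / (3 * m))

theorem sin_sq_le_or_sin_mul_sin_two_mul_le {m : ℕ} (hm : 2 ≤ m) {v : ℤ} (hv0 : 0 ≤ v)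
    (hvm : 2 * v ≤ m) (h3v : 3 * v ≠ m) :
    sin (v * π / m) ^ 2 ≤ sinThirdProd m ∨
      sin (v * π / m) * sin (2 * (v * π / m)) ≤ sinThirdProd m := by
  rw [sinThirdProd]
  have hm0 : (0 : ℝ) < m := by positivity
  set d := π / (3 * m) with hd_def
  set x := v * π / m with hx_def
  have hd : 0 < d := by positivity
  have hπ : π / 3 = m * d := by rw [hd_def]; field_simp
  have hx : x = 3 * v * d := by rw [hx_def, hd_def]; field_simp
  have hmR : (2 : ℝ) ≤ m := by exact_mod_cast hm
  have hvR : (0 : ℝ) ≤ v := by exact_mod_cast hv0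
  have hvmR : 2 * (v : ℝ) ≤ m := by exact_mod_cast hvm
  have hdle : d ≤ π / 6 := by nlinarith
  have hx0 : 0 ≤ x := by rw [hx]; positivity
  have hxπ : x ≤ π / 2 := by nlinarith
  have hsin_add : 0 ≤ sin (π / 3 + d) :=
    sin_nonneg_of_nonneg_of_le_pi (by positivity) (by linarith)
  have hsin_sub : sin (π / 3 - d) ≤ sin (π / 3 + d) :=
    sin_le_sin_of_le_of_le_pi_div_two (by linarith [pi_pos]) (by linarith) (by linarith)
  have hsx : 0 ≤ sin x := sin_nonneg_of_nonneg_of_le_pi hx0 (by linarith [pi_pos])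
  rcases lt_or_gt_of_ne h3v with hlt | hgt
  · left
    have hvR' : 3 * (v : ℝ) ≤ m - 1 := by exact_mod_cast (show 3 * v ≤ m - 1 by omega)
    have hxle : sin x ≤ sin (π / 3 - d) :=
      sin_le_sin_of_le_of_le_pi_div_two (by linarith [pi_pos]) (by linarith) (by nlinarith)
    rw [sq]
    exact mul_le_mul hxle (hxle.trans hsin_sub) hsx (hsx.trans hxle)
  · right
    have hvR' : (m : ℝ) + 1 ≤ 3 * v := by exact_mod_cast (show m + 1 ≤ 3 * v by omega)
    have hxge : π / 3 + d ≤ x := by nlinarith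
    calc sin x * sin (2 * x) ≤ sin (π / 3 + d) * sin (2 * (π / 3 + d)) :=
          sin_mul_sin_two_mul_le_of_le (by linarith) hxge hxπ
      _ = sin (π / 3 + d) * sin (π / 3 - 2 * d) := by
          rw [show 2 * (π / 3 + d) = π - (π / 3 - 2 * d) by ring, sin_pi_sub]
      _ ≤ sin (π / 3 + d) * sin (π / 3 - d) := mul_le_mul_of_nonneg_left
          (sin_le_sin_of_le_of_le_pi_div_two (by linarith [pi_pos]) (by linarith) (by linarith))
          hsin_add
      _ = sin (π / 3 - d) * sin (π / 3 + d) := mul_comm _ _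

theorem sin_sq_le_or_abs_sin_mul_abs_sin_two_mul_le {m : ℕ} (hm : 2 ≤ m) (h3 : ¬ 3 ∣ m)
    (t : ℤ) :
    sin (t * π / m) ^ 2 ≤ sinThirdProd m ∨
      |sin (t * π / m)| * |sin (2 * (t * π / m))| ≤ sinThirdProd m := by
  obtain ⟨v, hv0, hvm, hmod⟩ := exists_modEq_or_modEq_neg (by omega : 0 < m) t
  have h2 : |sin (2 * (t * π / m))| = |sin (2 * (v * π / m))| := by
    have := abs_sin_int_mul_pi_div_eq (a := 2 * t) (b := 2 * v)
      (hmod.imp (·.mul_left 2) fun h => by simpa using h.mul_left 2)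
    push_cast at this
    simpa only [mul_assoc, mul_div_assoc] using this
  have hx : 0 ≤ v * π / m := by positivity
  have hxπ : v * π / m ≤ π / 2 := by
    rw [div_le_iff₀ (by positivity)]
    have hvmR : 2 * (v : ℝ) ≤ m := by exact_mod_cast hvm
    nlinarith [mul_nonneg (sub_nonneg.2 hvmR) pi_pos.le]
  rw [← sq_abs, abs_sin_int_mul_pi_div_eq hmod, h2, sq_abs,
    abs_of_nonneg (sin_nonneg_of_nonneg_of_le_pi hx (by linarith [pi_pos])),
    abs_of_nonneg (sin_nonneg_of_nonneg_of_le_pi (by linarith) (by linarith))]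
  exact sin_sq_le_or_sin_mul_sin_two_mul_le hm hv0 hvm (by omega)

theorem sin_pi_div_three_sub_nonneg_and_add_nonneg {m : ℕ} (hm : 2 ≤ m) :
    0 ≤ sin (π / 3 - π / (3 * m)) ∧ 0 ≤ sin (π / 3 + π / (3 * m)) := by
  have hmR : (2 : ℝ) ≤ m := by exact_mod_cast hm
  have hd : π / (3 * m) ≤ π / 6 :=
    div_le_div_of_nonneg_left pi_pos.le (by norm_num) (by linarith)
  have hd0 : 0 ≤ π / (3 * m) := by positivity
  exact ⟨sin_nonneg_of_nonneg_of_le_pi (by linarith) (by linarith [pi_pos]),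
    sin_nonneg_of_nonneg_of_le_pi (by linarith [pi_pos]) (by linarith)⟩

theorem sinThirdProd_nonneg {m : ℕ} (hm : 2 ≤ m) : 0 ≤ sinThirdProd m :=
  let ⟨hsub, hadd⟩ := sin_pi_div_three_sub_nonneg_and_add_nonneg hm
  mul_nonneg hsub hadd

theorem sinThirdProd_le_bsq {m : ℕ} (hm : 2 ≤ m) (h3 : ¬ 3 ∣ m) : sinThirdProd m ≤ bsq m := by
  obtain ⟨hsub, hadd⟩ := sin_pi_div_three_sub_nonneg_and_add_nonneg hm
  have hm0 : (m : ℝ) ≠ 0 := by positivity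
  unfold bsq sinThirdProd
  rw [if_neg (by omega)]
  split_ifs with h1
  · rw [show π / 3 * (1 - 1 / m) = π / 3 - π / (3 * m) by field_simp]
    have := sin_pi_div_three_sub_mul_sin_add_le (-(π / (3 * m))) (by rwa [← sub_eq_add_neg])
    rw [sub_neg_eq_add, ← sub_eq_add_neg] at this
    exact (mul_comm _ _).trans_le this
  · rw [show π / 3 * (1 + 1 / m) = π / 3 + π / (3 * m) by field_simp]
    exact sin_pi_div_three_sub_mul_sin_add_le _ hadd

theorem mul_sqrt_three_sub_le (a : ℝ) : a * (√3 - a) ≤ 3 / 4 := by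
  nlinarith [sq_nonneg (a - √3 / 2), sq_sqrt (show (0:ℝ) ≤ 3 by norm_num)]

theorem bsq_le_one (m : ℕ) : bsq m ≤ 1 := by
  unfold bsq
  split_ifs <;> linarith [mul_sqrt_three_sub_le (sin (π / 3 * (1 + 3 / m))),
    mul_sqrt_three_sub_le (sin (π / 3 * (1 - 1 / m))),
    mul_sqrt_three_sub_le (sin (π / 3 * (1 + 1 / m)))]

theorem stmt_7 (m : ℕ) (hm : 5 ≤ m) (hgcd : Nat.gcd m 3 = 1) (t : ℤ) (h : ℕ) (hh : 1 ≤ h) :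
    (∏ k ∈ Finset.range h, |Real.sin (2 ^ k * (t : ℝ) * Real.pi / m)|) ≤ b m ^ (h - 1) := by
  have h3 : ¬ 3 ∣ m := fun h3 => by simpa [hgcd] using Nat.dvd_gcd h3 (dvd_refl 3)
  have hbsq : sinThirdProd m ≤ bsq m := sinThirdProd_le_bsq (by omega) h3
  have hb_sq : b m ^ 2 = bsq m := sq_sqrt ((sinThirdProd_nonneg (by omega)).trans hbsq)
  obtain ⟨n, rfl⟩ := Nat.exists_eq_add_of_le' hh
  rw [Nat.add_sub_cancel]
  refine prod_range_succ_le_pow (c := b m) (fun _ => abs_nonneg _) (fun _ => abs_sin_le_one _)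
    (sqrt_nonneg _) (sqrt_le_one.2 (bsq_le_one m)) (fun k => ?_) n
  have hk : 2 ^ k * (t : ℝ) * π / m = ((2 ^ k * t : ℤ) : ℝ) * π / m := by push_cast; ring
  have hk1 : 2 ^ (k + 1) * (t : ℝ) * π / m = 2 * (((2 ^ k * t : ℤ) : ℝ) * π / m) := by
    push_cast; ring
  rw [hk, hk1, hb_sq]
  exact (sin_sq_le_or_abs_sin_mul_abs_sin_two_mul_le (by omega) h3 (2 ^ k * t)).imp
    (fun h => abs_le_sqrt (h.trans hbsq)) (fun h => h.trans hbsq)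
end
end

section
/- Let m ≥ 5 be an integer with gcd(m,3) = 1 and let l be an integer. Then |sin(lπ/m)| ≠ √3/2, and if |sin(lπ/m)| ≤ √3/2 then |sin(lπ/m)| ≤ sin((π/m)·⌊m/3⌋). -/
open Finset Filter Topology

noncomputable section

/-! Choosing `k` with `|l - k m| ≤ m / 2` and setting `r = |l - k m|` gives
`|sin (l π / m)| = sin (r π / m)` with `r π / m ∈ [0, π / 2]`, where sine is strictly increasing.
As `√3 / 2 = sin ((m / 3) π / m)`, both claims reduce to comparing `r` with `m / 3`, and `3 r = m`
is excluded by `3 ∤ m`. -/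

open Real Set

lemma Int.exists_two_mul_abs_sub_mul_le (l m : ℤ) (hm : 0 < m) : ∃ k : ℤ, 2 * |l - k * m| ≤ m := by
  have hmod : l - l / m * m = l % m := by rw [Int.emod_def]; ring
  have h0 := Int.emod_nonneg l hm.ne'
  have h1 := Int.emod_lt_of_pos l hm
  rcases le_or_gt (2 * (l % m)) m with h | h
  · exact ⟨l / m, by rw [hmod, abs_of_nonneg h0]; exact h⟩
  · refine ⟨l / m + 1, ?_⟩
    rw [show l - (l / m + 1) * m = l % m - m by rw [← hmod]; ring, abs_of_neg (by omega)]
    omega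

lemma abs_sin_add_int_mul_pi (x : ℝ) (k : ℤ) : |sin (x + k * π)| = |sin x| := by
  rw [sin_add_int_mul_pi, abs_mul, abs_zpow, abs_neg, abs_one, one_zpow, one_mul]

lemma mul_pi_div_mem_Icc {x m : ℝ} (hm : 0 < m) (hx : 2 * |x| ≤ m) :
    x * π / m ∈ Icc (-(π / 2)) (π / 2) := by
  rw [Set.mem_Icc, ← abs_le, abs_div, abs_mul, abs_of_pos pi_pos, abs_of_pos hm, div_le_iff₀ hm]
  nlinarith [pi_pos]

lemma sin_mul_pi_div_le_sin_mul_pi_div_iff {x y m : ℝ} (hm : 0 < m) (hx : 2 * |x| ≤ m)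
    (hy : 2 * |y| ≤ m) : sin (x * π / m) ≤ sin (y * π / m) ↔ x ≤ y := by
  rw [strictMonoOn_sin.le_iff_le (mul_pi_div_mem_Icc hm hx) (mul_pi_div_mem_Icc hm hy),
    div_le_div_iff_of_pos_right hm, mul_le_mul_iff_of_pos_right pi_pos]

lemma sin_mul_pi_div_inj {x y m : ℝ} (hm : 0 < m) (hx : 2 * |x| ≤ m)
    (hy : 2 * |y| ≤ m) : sin (x * π / m) = sin (y * π / m) ↔ x = y := by
  rw [injOn_sin.eq_iff (mul_pi_div_mem_Icc hm hx) (mul_pi_div_mem_Icc hm hy),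
    div_left_inj' hm.ne', mul_left_inj' pi_pos.ne']

lemma exists_abs_sin_int_mul_pi_div_eq (l : ℤ) {m : ℕ} (hm : 0 < m) :
    ∃ r : ℕ, 2 * r ≤ m ∧ |sin (l * π / m)| = sin (r * π / m) := by
  obtain ⟨k, hk⟩ := Int.exists_two_mul_abs_sub_mul_le l m (by exact_mod_cast hm)
  have hmR : (0 : ℝ) < m := by exact_mod_cast hm
  have hkR : 2 * |((l - k * m : ℤ) : ℝ)| ≤ m := by rw [← Int.cast_abs]; exact_mod_cast hk
  rw [Int.abs_eq_natAbs] at hk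
  refine ⟨(l - k * m).natAbs, by omega, ?_⟩
  have hsplit : (l : ℝ) * π / m = ((l - k * m : ℤ) : ℝ) * π / m + k * π := by
    push_cast; field_simp; ring
  have hle : |((l - k * m : ℤ) : ℝ) * π / m| ≤ π :=
    (abs_le.2 (mul_pi_div_mem_Icc hmR hkR)).trans (by linarith [pi_pos])
  rw [hsplit, abs_sin_add_int_mul_pi, abs_sin_eq_sin_abs_of_abs_le_pi hle, Nat.cast_natAbs,
    abs_div, abs_mul, abs_of_pos pi_pos, abs_of_pos hmR, Int.cast_abs]

lemma Int.floor_natCast_div_natCast {K : Type*} [Field K] [LinearOrder K] [IsOrderedRing K]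
    [FloorRing K] (m n : ℕ) : ⌊(m : K) / n⌋ = ((m / n : ℕ) : ℤ) := by
  rw [Int.floor_div_natCast, Int.floor_natCast]
  norm_cast

theorem stmt_9_general (m : ℕ) (hgcd : Nat.gcd m 3 = 1) (l : ℤ) :
    |Real.sin ((l : ℝ) * Real.pi / m)| ≠ Real.sqrt 3 / 2 ∧
      (|Real.sin ((l : ℝ) * Real.pi / m)| ≤ Real.sqrt 3 / 2 →
        |Real.sin ((l : ℝ) * Real.pi / m)| ≤ Real.sin (Real.pi / m * (⌊(m : ℝ) / 3⌋ : ℤ))) := by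
  have hm3 : ¬ 3 ∣ m := Nat.prime_three.coprime_iff_not_dvd.1 (Nat.Coprime.symm hgcd)
  have hmR : (0 : ℝ) < m := by
    exact_mod_cast Nat.pos_of_ne_zero (by rintro rfl; exact hm3 (dvd_zero 3))
  obtain ⟨r, hr, hsin⟩ := exists_abs_sin_int_mul_pi_div_eq l (Nat.cast_pos.1 hmR)
  have hrR : 2 * |(r : ℝ)| ≤ m := by rw [Nat.abs_cast]; exact_mod_cast hr
  have hthird : √3 / 2 = sin ((m / 3 : ℝ) * π / m) := by
    rw [← sin_pi_div_three]; congr 1; field_simp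
  have hthirdR : 2 * |(m / 3 : ℝ)| ≤ m := by rw [abs_of_pos (by positivity)]; linarith
  have hq : 2 * |((m / 3 : ℕ) : ℝ)| ≤ m := by
    rw [Nat.abs_cast]; exact_mod_cast (by omega : 2 * (m / 3) ≤ m)
  rw [hsin, hthird, ne_eq, sin_mul_pi_div_inj hmR hrR hthirdR,
    sin_mul_pi_div_le_sin_mul_pi_div_iff hmR hrR hthirdR, le_div_iff₀ three_pos,
    eq_div_iff three_ne_zero, show (3 : ℝ) = ((3 : ℕ) : ℝ) by norm_num,
    Int.floor_natCast_div_natCast, Int.cast_natCast, div_mul_eq_mul_div, mul_comm π,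
    sin_mul_pi_div_le_sin_mul_pi_div_iff hmR hrR hq]
  norm_cast
  exact ⟨fun h => hm3 ⟨r, by omega⟩, fun h => by omega⟩

theorem stmt_9 (m : ℕ) (hm : 5 ≤ m) (hgcd : Nat.gcd m 3 = 1) (l : ℤ) :
    |Real.sin ((l : ℝ) * Real.pi / m)| ≠ Real.sqrt 3 / 2 ∧
      (|Real.sin ((l : ℝ) * Real.pi / m)| ≤ Real.sqrt 3 / 2 →
        |Real.sin ((l : ℝ) * Real.pi / m)| ≤ Real.sin (Real.pi / m * (⌊(m : ℝ) / 3⌋ : ℤ))) :=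
  stmt_9_general m hgcd l
end
end

section
/- Let m ≥ 5 be an integer with gcd(m,3) = 1. For integers j with 0 ≤ j ≤ m−1, the maximum of |sin(jπ/m)|·(√3 − |sin(jπ/m)|) equals sin((π/m)·⌊m/3⌋)·(√3 − sin((π/m)·⌊m/3⌋)) if m ≡ 1 (mod 3) and equals sin((π/m)·⌈m/3⌉)·(√3 − sin((π/m)·⌈m/3⌉)) if m ≡ 2 (mod 3), and this maximum is strictly less than 3/4. -/
open Finset Filter Topology

noncomputable section

/-!
On `[0, √3]` the function `x ↦ x * (√3 - x)` is symmetric about `√3 / 2`, where it takes the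
value `3 / 4`, and decreases with the distance from `√3 / 2`. The values `sin (j * π / m)` rise
for `2 * j ≤ m` and are invariant under `j ↦ m - j`, so the maximum is attained at whichever of
the two consecutive values enclosing `√3 / 2`, at `j = ⌊m / 3⌋` and `j = ⌈m / 3⌉`, lies closer
to `√3 / 2`. With `a = π / (3 * m)` these are `sin (π / 3 - a)` and `sin (π / 3 + 2 * a)` when
`m % 3 = 1`, and `sin (π / 3 - 2 * a)` and `sin (π / 3 + a)` when `m % 3 = 2`; which one is
closer is decided by the sign of their sum minus `√3`. Neither equals `√3 / 2`, so the maximum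
is strictly below `3 / 4`.
-/

open Real

section Quadratic

variable {c t x : ℝ}

lemma mul_sub_le_mul_sub_of_le_of_le (h₁ : x ≤ t) (h₂ : x ≤ c - t) :
    x * (c - x) ≤ t * (c - t) := by
  nlinarith

lemma mul_sub_le_mul_sub_of_ge_of_ge (h₁ : t ≤ x) (h₂ : c - t ≤ x) :
    x * (c - x) ≤ t * (c - t) := by
  nlinarith

lemma mul_sqrt_three_sub_lt_of_ne (h : x ≠ √3 / 2) : x * (√3 - x) < 3 / 4 := by
  nlinarith [sq_sqrt (show (0 : ℝ) ≤ 3 by norm_num), sq_pos_of_ne_zero (sub_ne_zero.2 h)]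

end Quadratic

section Trigonometric

variable {a : ℝ}

lemma sqrt_three_le_sin_pi_div_three_sub_add_sin_pi_div_three_add_two_mul
    (ha₀ : 0 < a) (ha : a ≤ π / 21) : √3 ≤ sin (π / 3 - a) + sin (π / 3 + 2 * a) := by
  have hpi : π < 3.15 := pi_lt_d2
  have hs : sin a < 0.15 := (sin_lt ha₀).trans_le (by linarith)
  have hs₀ : 0 < sin a := sin_pos_of_pos_of_lt_pi ha₀ (by linarith [pi_gt_three])
  have hc₁ : cos a ≤ 1 := cos_le_one a
  have hc : 0.98 ≤ cos a := by nlinarith [one_sub_sq_div_two_le_cos (x := a)]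
  have hsqrt : √3 < 1.74 := (sqrt_lt' (by norm_num)).2 (by norm_num)
  -- `1 - cos a = sin a ^ 2 / (1 + cos a)` is quadratically small in `sin a`
  have hquad : 1.98 * (1 - cos a) ≤ sin a ^ 2 := by nlinarith [sin_sq_add_cos_sq a]
  have hfactor : sin (π / 3 - a) + sin (π / 3 + 2 * a) - √3
      = sin a / 2 * (2 * cos a - 1) - √3 / 2 * (2 * cos a + 3) * (1 - cos a) := by
    rw [sin_sub, sin_add, cos_two_mul, sin_two_mul, sin_pi_div_three, cos_pi_div_three]
    ring
  have hcoef : √3 * (2 * cos a + 3) ≤ 8.7 := by nlinarith [sqrt_nonneg 3]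
  nlinarith [mul_le_mul_of_nonneg_right hcoef (by linarith : 0 ≤ 1 - cos a),
    mul_lt_mul_of_pos_left hs hs₀]

lemma sin_pi_div_three_add_add_sin_pi_div_three_sub_two_mul_le_sqrt_three
    (ha₀ : 0 ≤ a) (ha : a ≤ π / 3) : sin (π / 3 + a) + sin (π / 3 - 2 * a) ≤ √3 := by
  have hs : 0 ≤ sin a := sin_nonneg_of_nonneg_of_le_pi ha₀ (by linarith [pi_pos])
  have hc : 1 / 2 ≤ cos a :=
    cos_pi_div_three ▸ cos_le_cos_of_nonneg_of_le_pi ha₀ (by linarith [pi_pos]) ha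
  have hfactor : sin (π / 3 + a) + sin (π / 3 - 2 * a) - √3
      = √3 / 2 * (2 * cos a + 3) * (cos a - 1) + sin a / 2 * (1 - 2 * cos a) := by
    rw [sin_sub, sin_add, cos_two_mul, sin_two_mul, sin_pi_div_three, cos_pi_div_three]
    ring
  nlinarith [cos_le_one a, sqrt_nonneg 3, mul_nonneg hs (by linarith : 0 ≤ 2 * cos a - 1),
    mul_nonneg (sqrt_nonneg 3) (mul_nonneg (by linarith : 0 ≤ 2 * cos a + 3)
      (by linarith [cos_le_one a] : 0 ≤ 1 - cos a))]

end Trigonometric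

section Grid

variable {m : ℕ}

lemma sin_nat_mul_pi_div_nonneg (hm : 0 < m) {j : ℕ} (hj : j ≤ m) : 0 ≤ sin (j * π / m) := by
  refine sin_nonneg_of_nonneg_of_le_pi (by positivity) ?_
  rw [div_le_iff₀ (by positivity)]
  exact mul_le_mul_of_nonneg_right (by exact_mod_cast hj) pi_pos.le |>.trans_eq (mul_comm _ _)

lemma sin_nat_sub_mul_pi_div (hm : 0 < m) {j : ℕ} (hj : j ≤ m) :
    sin ((m - j : ℕ) * π / m) = sin (j * π / m) := by
  rw [Nat.cast_sub hj, sub_mul, sub_div, mul_div_cancel_left₀ _ (by positivity), sin_pi_sub]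

lemma sin_nat_mul_pi_div_le_sin (hm : 0 < m) {i j : ℕ} (hij : i ≤ j) (hj : 2 * j ≤ m) :
    sin (i * π / m) ≤ sin (j * π / m) := by
  have hm' : (0 : ℝ) < m := by positivity
  refine sin_le_sin_of_le_of_le_pi_div_two (by linarith [pi_pos, show 0 ≤ i * π / m by positivity])
    ?_ (by gcongr)
  rw [div_le_iff₀ hm']
  have : (2 * j : ℝ) ≤ m := by exact_mod_cast hj
  nlinarith [pi_pos]

variable {p : ℕ} {c t : ℝ}

lemma abs_sin_mul_sub_le_of_bracket (hp : 2 * (p + 1) ≤ m)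
    (h₁ : sin (p * π / m) ≤ t) (h₂ : sin (p * π / m) ≤ c - t)
    (h₃ : t ≤ sin ((p + 1 : ℕ) * π / m)) (h₄ : c - t ≤ sin ((p + 1 : ℕ) * π / m))
    {j : ℕ} (hj : j ≤ m) :
    |sin (j * π / m)| * (c - |sin (j * π / m)|) ≤ t * (c - t) := by
  have hm : 0 < m := by omega
  rw [abs_of_nonneg (sin_nat_mul_pi_div_nonneg hm hj)]
  wlog hjm : 2 * j ≤ m generalizing j
  · rw [← sin_nat_sub_mul_pi_div hm hj]
    exact this (Nat.sub_le m j) (by omega)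
  rcases le_or_gt j p with hjp | hjp
  · have hle := sin_nat_mul_pi_div_le_sin hm hjp (by omega)
    exact mul_sub_le_mul_sub_of_le_of_le (hle.trans h₁) (hle.trans h₂)
  · have hle := sin_nat_mul_pi_div_le_sin hm hjp hjm
    exact mul_sub_le_mul_sub_of_ge_of_ge (h₃.trans hle) (h₄.trans hle)

end Grid

section Maximum

variable {m p : ℕ}

lemma isGreatest_of_sin_lt_of_sqrt_three_le_add (hp : 2 * (p + 1) ≤ m)
    (hlt : sin (p * π / m) < √3 / 2)
    (hsum : √3 ≤ sin (p * π / m) + sin ((p + 1 : ℕ) * π / m)) :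
    IsGreatest ((fun j : ℕ => |sin (j * π / m)| * (√3 - |sin (j * π / m)|)) '' Set.Icc 0 (m - 1))
      (sin (p * π / m) * (√3 - sin (p * π / m))) ∧
    sin (p * π / m) * (√3 - sin (p * π / m)) < 3 / 4 := by
  refine ⟨⟨⟨p, ⟨p.zero_le, by omega⟩, ?_⟩, ?_⟩, mul_sqrt_three_sub_lt_of_ne hlt.ne⟩
  · dsimp only
    rw [abs_of_nonneg (sin_nat_mul_pi_div_nonneg (by omega) (by omega))]
  · rintro _ ⟨j, ⟨-, hj⟩, rfl⟩
    exact abs_sin_mul_sub_le_of_bracket hp le_rfl (by linarith) (by linarith) (by linarith)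
      (by omega : j ≤ m)

lemma isGreatest_of_lt_sin_of_add_le_sqrt_three (hp : 2 * (p + 1) ≤ m)
    (hlt : √3 / 2 < sin ((p + 1 : ℕ) * π / m))
    (hsum : sin (p * π / m) + sin ((p + 1 : ℕ) * π / m) ≤ √3) :
    IsGreatest ((fun j : ℕ => |sin (j * π / m)| * (√3 - |sin (j * π / m)|)) '' Set.Icc 0 (m - 1))
      (sin ((p + 1 : ℕ) * π / m) * (√3 - sin ((p + 1 : ℕ) * π / m))) ∧
    sin ((p + 1 : ℕ) * π / m) * (√3 - sin ((p + 1 : ℕ) * π / m)) < 3 / 4 := by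
  refine ⟨⟨⟨p + 1, ⟨(p + 1).zero_le, by omega⟩, ?_⟩, ?_⟩, mul_sqrt_three_sub_lt_of_ne hlt.ne'⟩
  · dsimp only
    rw [abs_of_nonneg (sin_nat_mul_pi_div_nonneg (by omega) (by omega))]
  · rintro _ ⟨j, ⟨-, hj⟩, rfl⟩
    exact abs_sin_mul_sub_le_of_bracket hp (by linarith) (by linarith) le_rfl (by linarith)
      (by omega : j ≤ m)

end Maximum

section Residues

variable {m k : ℕ}

lemma sin_lt_and_sqrt_three_le_add_of_eq_three_mul_add_one (hk : 2 ≤ k) (hm : m = 3 * k + 1) :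
    sin (k * π / m) < √3 / 2 ∧ √3 ≤ sin (k * π / m) + sin ((k + 1 : ℕ) * π / m) := by
  have hmr : (m : ℝ) = 3 * k + 1 := by rw [hm]; push_cast; ring
  have hk₁ : k * π / m = π / 3 - π / (3 * m) := by
    rw [hmr]; field_simp; ring
  have hk₂ : (k + 1 : ℕ) * π / m = π / 3 + 2 * (π / (3 * m)) := by
    rw [hmr]; push_cast; field_simp; ring
  have ha₀ : 0 < π / (3 * m) := by rw [hmr]; positivity
  have ha : π / (3 * m) ≤ π / 21 := by
    gcongr; rw [hmr]; linarith [show (2 : ℝ) ≤ k by exact_mod_cast hk]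
  rw [hk₁, hk₂, ← sin_pi_div_three]
  exact ⟨sin_lt_sin_of_lt_of_le_pi_div_two (by linarith [pi_pos]) (by linarith [pi_pos])
      (by linarith), sqrt_three_le_sin_pi_div_three_sub_add_sin_pi_div_three_add_two_mul ha₀ ha⟩

lemma lt_sin_and_add_le_sqrt_three_of_eq_three_mul_add_two (hk : 1 ≤ k) (hm : m = 3 * k + 2) :
    √3 / 2 < sin ((k + 1 : ℕ) * π / m) ∧ sin (k * π / m) + sin ((k + 1 : ℕ) * π / m) ≤ √3 := by
  have hmr : (m : ℝ) = 3 * k + 2 := by rw [hm]; push_cast; ring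
  have hk₁ : k * π / m = π / 3 - 2 * (π / (3 * m)) := by
    rw [hmr]; field_simp; ring
  have hk₂ : (k + 1 : ℕ) * π / m = π / 3 + π / (3 * m) := by
    rw [hmr]; push_cast; field_simp; ring
  have ha₀ : 0 < π / (3 * m) := by rw [hmr]; positivity
  have ha : π / (3 * m) ≤ π / 15 := by
    gcongr; rw [hmr]; linarith [show (1 : ℝ) ≤ k by exact_mod_cast hk]
  rw [hk₁, hk₂, ← sin_pi_div_three, add_comm (sin _)]
  exact ⟨sin_lt_sin_of_lt_of_le_pi_div_two (by linarith [pi_pos]) (by linarith [pi_pos])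
      (by linarith), sin_pi_div_three_add_add_sin_pi_div_three_sub_two_mul_le_sqrt_three
        ha₀.le (by linarith [pi_pos])⟩

end Residues

theorem stmt_10 (m : ℕ) (hm : 5 ≤ m) (hgcd : Nat.gcd m 3 = 1) :
    (IsGreatest
      ((fun j : ℕ =>
          |Real.sin ((j : ℝ) * Real.pi / m)| *
            (Real.sqrt 3 - |Real.sin ((j : ℝ) * Real.pi / m)|)) '' Set.Icc 0 (m - 1))
      (if m % 3 = 1 then
          Real.sin (Real.pi / m * (⌊(m : ℝ) / 3⌋ : ℤ)) *
            (Real.sqrt 3 - Real.sin (Real.pi / m * (⌊(m : ℝ) / 3⌋ : ℤ)))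
        else
          Real.sin (Real.pi / m * (⌈(m : ℝ) / 3⌉ : ℤ)) *
            (Real.sqrt 3 - Real.sin (Real.pi / m * (⌈(m : ℝ) / 3⌉ : ℤ))))) ∧
    (if m % 3 = 1 then
        Real.sin (Real.pi / m * (⌊(m : ℝ) / 3⌋ : ℤ)) *
          (Real.sqrt 3 - Real.sin (Real.pi / m * (⌊(m : ℝ) / 3⌋ : ℤ)))
      else
        Real.sin (Real.pi / m * (⌈(m : ℝ) / 3⌉ : ℤ)) *
          (Real.sqrt 3 - Real.sin (Real.pi / m * (⌈(m : ℝ) / 3⌉ : ℤ)))) < 3 / 4 := by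
  have hm₃ : m % 3 ≠ 0 := fun h => by
    rw [Nat.gcd_comm, Nat.gcd_eq_left (Nat.dvd_of_mod_eq_zero h)] at hgcd; omega
  obtain ⟨k, hk⟩ : ∃ k, m = 3 * k + m % 3 := ⟨m / 3, by omega⟩
  split_ifs with hm₁
  · have hfloor : ⌊(m : ℝ) / 3⌋ = (k : ℕ) := by
      rw [Int.floor_eq_iff, hk, hm₁]; push_cast; constructor <;> linarith
    rw [hfloor, Int.cast_natCast, show π / m * k = k * π / m by ring]
    obtain ⟨hlt, hsum⟩ := sin_lt_and_sqrt_three_le_add_of_eq_three_mul_add_one (m := m) (k := k)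
      (by omega) (by omega)
    exact isGreatest_of_sin_lt_of_sqrt_three_le_add (by omega) hlt hsum
  · have hceil : ⌈(m : ℝ) / 3⌉ = (k + 1 : ℕ) := by
      rw [Int.ceil_eq_iff, hk, show m % 3 = 2 by omega]; push_cast; constructor <;> linarith
    rw [hceil, Int.cast_natCast, show π / m * (k + 1 : ℕ) = (k + 1 : ℕ) * π / m by ring]
    obtain ⟨hlt, hsum⟩ := lt_sin_and_add_le_sqrt_three_of_eq_three_mul_add_two (m := m) (k := k)
      (by omega) (by omega)
    exact isGreatest_of_lt_sin_of_add_le_sqrt_three (by omega) hlt hsum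
end
end
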